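/- Consider a bucket maintained by the generalized majority vote algorithm with fields (V, K, C), where V is the total sum of all inserted values. If the stored key K equals a flow x, then C ≤ S(x) ≤ (V + C)/2; if K ≠ x, then 0 ≤ S(x) ≤ (V − C)/2. -/
import Mathlib


/-- State of a bucket in MV-Sketch: total value `V`, candidate key `K`,
indicator counter `C`. -/
structure Bucket (α : Type*) where
  V : ℝ
  K : α
  C : ℝ

/-- One update of the generalized majority vote algorithm on input `(y, v)`. -/
noncomputable def Bucket.step {α : Type*} [DecidableEq α] (b : Bucket α) (p : α × ℝ) :
    Bucket α :=
  if p.1 = b.K then ⟨b.V + p.2, b.K, b.C + p.2⟩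
  else if b.C - p.2 < 0 then ⟨b.V + p.2, p.1, p.2 - b.C⟩
  else ⟨b.V + p.2, b.K, b.C - p.2⟩

/-- State of the bucket after processing the whole stream `l`, starting from
an arbitrary initial key `k0`, `V = 0`, `C = 0`. -/
noncomputable def runBucket {α : Type*} [DecidableEq α] (k0 : α) (l : List (α × ℝ)) :
    Bucket α :=
  l.foldl Bucket.step ⟨0, k0, 0⟩

/-- Total value of flow `x` in the stream `l`. -/
def flowSum {α : Type*} [DecidableEq α] (x : α) (l : List (α × ℝ)) : ℝ :=
  ((l.filter fun p => p.1 = x).map Prod.snd).sum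

lemma flowSum_cons {α : Type*} [DecidableEq α] (x : α) (p : α × ℝ) (l : List (α × ℝ)) :
    flowSum x (p :: l) = (if p.1 = x then p.2 else 0) + flowSum x l := by
  simp only [flowSum, List.filter_cons]
  split <;> rename_i h <;> simp_all

lemma bucket_aux {α : Type*} [DecidableEq α] (x : α) :
    ∀ (l : List (α × ℝ)) (b : Bucket α) (s : ℝ),
      (∀ p ∈ l, 0 ≤ p.2) → 0 ≤ b.C →
      (b.K = x → b.C ≤ s ∧ 2 * s ≤ b.V + b.C) →
      (b.K ≠ x → 0 ≤ s ∧ 2 * s ≤ b.V - b.C) →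
      0 ≤ (l.foldl Bucket.step b).C ∧
      ((l.foldl Bucket.step b).K = x →
        (l.foldl Bucket.step b).C ≤ s + flowSum x l ∧
        2 * (s + flowSum x l) ≤ (l.foldl Bucket.step b).V + (l.foldl Bucket.step b).C) ∧
      ((l.foldl Bucket.step b).K ≠ x →
        0 ≤ s + flowSum x l ∧
        2 * (s + flowSum x l) ≤ (l.foldl Bucket.step b).V - (l.foldl Bucket.step b).C) := by
  intro l
  induction l with
  | nil =>
    intro b s _ hC h1 h2
    simpa [flowSum] using ⟨hC, h1, h2⟩
  | cons p l ih =>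
    intro b s hv hC h1 h2
    have hp : 0 ≤ p.2 := hv p (by simp)
    have hv' : ∀ q ∈ l, 0 ≤ q.2 := fun q hq => hv q (by simp [hq])
    rw [List.foldl_cons, flowSum_cons]
    have key : 0 ≤ (Bucket.step b p).C ∧
        ((Bucket.step b p).K = x →
          (Bucket.step b p).C ≤ s + (if p.1 = x then p.2 else 0) ∧
          2 * (s + (if p.1 = x then p.2 else 0)) ≤ (Bucket.step b p).V + (Bucket.step b p).C) ∧
        ((Bucket.step b p).K ≠ x →
          0 ≤ s + (if p.1 = x then p.2 else 0) ∧
          2 * (s + (if p.1 = x then p.2 else 0)) ≤ (Bucket.step b p).V - (Bucket.step b p).C) := by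
      unfold Bucket.step
      by_cases hbx : b.K = x
      · obtain ⟨A1, A2⟩ := h1 hbx
        by_cases hpb : p.1 = b.K
        · simp only [hpb, if_pos, hbx, if_pos rfl]
          refine ⟨by linarith, fun _ => ⟨by linarith, by linarith⟩, fun h => absurd rfl h⟩
        · have hpx : p.1 ≠ x := hbx ▸ hpb
          simp only [if_neg hpb, if_neg hpx]
          by_cases hneg : b.C - p.2 < 0
          · simp only [if_pos hneg]
            refine ⟨by linarith, fun h => absurd h hpx, fun _ => ⟨by linarith, by linarith⟩⟩
          · simp only [if_neg hneg]
            refine ⟨by linarith, fun _ => ⟨by linarith, by linarith⟩, fun h => absurd hbx h⟩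
      · obtain ⟨A1, A2⟩ := h2 hbx
        by_cases hpb : p.1 = b.K
        · have hpx : p.1 ≠ x := fun c => hbx (hpb ▸ c)
          simp only [if_pos hpb, if_neg hpx]
          refine ⟨by linarith, fun h => absurd h hbx, fun _ => ⟨by linarith, by linarith⟩⟩
        · by_cases hpx : p.1 = x
          · simp only [if_neg hpb, if_pos hpx]
            by_cases hneg : b.C - p.2 < 0
            · simp only [if_pos hneg]
              refine ⟨by linarith, fun _ => ⟨by linarith, by linarith⟩, fun h => absurd hpx h⟩
            · simp only [if_neg hneg]
              refine ⟨by linarith, fun h => absurd h hbx, fun _ => ⟨by linarith, by linarith⟩⟩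
          · simp only [if_neg hpb, if_neg hpx]
            by_cases hneg : b.C - p.2 < 0
            · simp only [if_pos hneg]
              refine ⟨by linarith, fun h => absurd h hpx, fun _ => ⟨by linarith, by linarith⟩⟩
            · simp only [if_neg hneg]
              refine ⟨by linarith, fun h => absurd h hbx, fun _ => ⟨by linarith, by linarith⟩⟩
    obtain ⟨k0', k1, k2⟩ := key
    have := ih (Bucket.step b p) (s + (if p.1 = x then p.2 else 0)) hv' k0' k1 k2
    refine ⟨this.1, fun h => ?_, fun h => ?_⟩
    · obtain ⟨B1, B2⟩ := this.2.1 h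
      constructor <;> linarith
    · obtain ⟨B1, B2⟩ := this.2.2 h
      constructor <;> linarith

/-- Per-bucket bounds on the sum of a flow `x` hashed to the bucket:
if the stored key equals `x` then `C ≤ S(x) ≤ (V + C)/2`, otherwise
`0 ≤ S(x) ≤ (V - C)/2`. -/
theorem bucket_bounds {α : Type*} [DecidableEq α] (k0 x : α)
    (l : List (α × ℝ)) (hv : ∀ p ∈ l, 0 ≤ p.2) :
    ((runBucket k0 l).K = x →
      (runBucket k0 l).C ≤ flowSum x l ∧
      flowSum x l ≤ ((runBucket k0 l).V + (runBucket k0 l).C) / 2) ∧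
    ((runBucket k0 l).K ≠ x →
      0 ≤ flowSum x l ∧
      flowSum x l ≤ ((runBucket k0 l).V - (runBucket k0 l).C) / 2) := by
  have := bucket_aux x l ⟨0, k0, 0⟩ 0 hv le_rfl
    (fun _ => ⟨le_rfl, by norm_num⟩) (fun _ => ⟨le_rfl, by norm_num⟩)
  simp only [zero_add] at this
  simp only [runBucket]
  refine ⟨fun h => ?_, fun h => ?_⟩
  · obtain ⟨B1, B2⟩ := this.2.1 h
    exact ⟨B1, by linarith⟩
  · obtain ⟨B1, B2⟩ := this.2.2 h
    exact ⟨B1, by linarith⟩
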